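/- Let 𝓗 be a Clar formula of an extremal fullerene graph F_n with n ≥ 60, and let M be the perfect matching F_n − 𝓗 (which consists of (n − 6·|𝓗|)/2 edges). Then a face f of F_n is a pentagon if and only if there exists an edge e ∈ M such that e meets f (shares a vertex with f) but e is not an edge of f. -/

import Mathlib

/-!
Count the pairs `(v, f)` where `v` is a vertex of the face `f` whose `M`-edge is not an edge of
`f`. In a cubic plane graph a vertex lies on three faces, two of which contain its `M`-edge, so
there are exactly `|V(M)| = n - 6 |𝓗| = 12` such pairs. For a face `f ∉ 𝓗`, the vertices of `f`
covered by `𝓗` come in pairs (two distinct faces meet along whole edges), and so do those matched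
along edges of `f`; hence an odd face has an odd, in particular positive, number of such
vertices. The twelve pentagons therefore use up all twelve pairs, and no hexagon has any.
-/

namespace FG

/-- A combinatorial plane (spherically embedded) graph: a finite simple graph together with
its collection of faces, each face recorded as the finset of edges of its boundary cycle.
Every face boundary is a cycle, every edge lies on exactly two faces, and Euler's formula
holds (edges are counted via the face incidences). -/
structure PlaneGraph (V : Type) [Fintype V] [DecidableEq V] : Type where
  graph : SimpleGraph V
  faces : Finset (Finset (Sym2 V))
  face_edges : ∀ f ∈ faces, ∀ e ∈ f, e ∈ graph.edgeSet
  face_cycle : ∀ f ∈ faces, ∃ (v : V) (c : graph.Walk v v), c.IsCycle ∧ c.edges.toFinset = f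
  edge_faces : ∀ e ∈ graph.edgeSet, (faces.filter (fun f => e ∈ f)).card = 2
  euler : 2 * (Fintype.card V + faces.card) = (∑ f ∈ faces, f.card) + 4

variable {V : Type} [Fintype V] [DecidableEq V]

/-- The vertices incident with at least one edge of an edge set. -/
def edgeVerts (E : Finset (Sym2 V)) : Finset V :=
  Finset.univ.filter fun v => ∃ e ∈ E, v ∈ e

/-- The degree of a vertex in the subgraph spanned by an edge set. -/
def deg (E : Finset (Sym2 V)) (v : V) : ℕ := (E.filter fun e => v ∈ e).card

/-- The vertices covered by a collection of faces. -/
def facesVerts (H : Finset (Finset (Sym2 V))) : Finset V := edgeVerts (H.sup id)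

/-- An edge set is a matching: non-loop edges, pairwise vertex-disjoint. -/
def IsMatching (M : Finset (Sym2 V)) : Prop :=
  (∀ e ∈ M, ¬e.IsDiag) ∧ ∀ e ∈ M, ∀ e' ∈ M, e ≠ e' → ∀ v : V, v ∈ e → v ∉ e'

/-- A fullerene graph: a cubic 3-connected plane graph with (exactly 12) pentagonal
faces and hexagonal faces. -/
structure IsFullerene (P : PlaneGraph V) : Prop where
  cubic : ∀ v : V, (P.graph.neighborSet v).ncard = 3
  threeConnected : ∀ s : Set V, s.ncard ≤ 2 → (SimpleGraph.induce sᶜ P.graph).Connected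
  faceSize : ∀ f ∈ P.faces, f.card = 5 ∨ f.card = 6
  pentTwelve : (P.faces.filter fun f => f.card = 5).card = 12

/-- A fragment of a plane graph: a nonempty set of faces (a cycle together with its
interior) whose boundary — the set of edges lying on exactly one chosen face — is a
single cycle. -/
structure Fragment (P : PlaneGraph V) : Type where
  inFaces : Finset (Finset (Sym2 V))
  nonempty : inFaces.Nonempty
  subFaces : inFaces ⊆ P.faces
  boundary_cycle : ∃ (v : V) (c : P.graph.Walk v v), c.IsCycle ∧
    c.edges.toFinset =
      (inFaces.sup id).filter fun e => (inFaces.filter fun f => e ∈ f).card = 1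

/-- The edge set of a fragment. -/
def Fragment.edges {P : PlaneGraph V} (B : Fragment P) : Finset (Sym2 V) := B.inFaces.sup id

/-- The boundary edges of a fragment. -/
def Fragment.boundary {P : PlaneGraph V} (B : Fragment P) : Finset (Sym2 V) :=
  B.edges.filter fun e => (B.inFaces.filter fun f => e ∈ f).card = 1

/-- A pentagonal fragment: all inner faces are pentagons. -/
def IsPentagonalFragment {P : PlaneGraph V} (B : Fragment P) : Prop :=
  ∀ f ∈ B.inFaces, f.card = 5

/-- The faces of `P` adjoining the subgraph with edge set `E`: not a face of the
subgraph, but sharing at least one edge with it. -/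
def adjoiningFaces (P : PlaneGraph V) (E : Finset (Sym2 V)) : Finset (Finset (Sym2 V)) :=
  P.faces.filter fun f => ¬f ⊆ E ∧ (f ∩ E).Nonempty

/-- The territory `T[G]` of the subgraph with edge set `E`: the subgraph together with
all adjoining faces. -/
def territoryEdges (P : PlaneGraph V) (E : Finset (Sym2 V)) : Finset (Sym2 V) :=
  E ∪ (adjoiningFaces P E).sup id

/-- `w(G)`: the number of 2-degree vertices of the subgraph spanned by `E`. -/
def wcount (E : Finset (Sym2 V)) : ℕ := ((edgeVerts E).filter fun v => deg E v = 2).card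

/-- A subgraph is maximal in `P` when its hexagon extension is contained in `P`,
i.e. every adjoining face is a hexagon. -/
def IsMaximalIn (P : PlaneGraph V) (E : Finset (Sym2 V)) : Prop :=
  ∀ f ∈ adjoiningFaces P E, f.card = 6

/-- `H ∈ 𝒮(G)` for the subgraph `G` with edge set `E`: `H` is a set of mutually disjoint
hexagons of the hexagon extension `H[G]` (hexagonal faces sharing at least one edge with
`G`) such that `G − H` has a matching covering all remaining 3-degree vertices of `G`. -/
def SextetAdm (P : PlaneGraph V) (E : Finset (Sym2 V)) (H : Finset (Finset (Sym2 V))) : Prop :=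
  (∀ f ∈ H, f ∈ P.faces ∧ f.card = 6 ∧ (f ∩ E).Nonempty) ∧
  (∀ f ∈ H, ∀ g ∈ H, f ≠ g → Disjoint (edgeVerts f) (edgeVerts g)) ∧
  ∃ M : Finset (Sym2 V), M ⊆ E ∧ IsMatching M ∧
    (∀ e ∈ M, ∀ v : V, v ∈ e → v ∉ facesVerts H) ∧
    ∀ v ∈ edgeVerts E, deg E v = 3 → v ∉ facesVerts H → ∃ e ∈ M, v ∈ e

/-- `U_H(G) = V(G) ∖ V(H)`. -/
def Uset (E : Finset (Sym2 V)) (H : Finset (Finset (Sym2 V))) : Finset V :=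
  edgeVerts E \ facesVerts H

/-- A Clar set of `H[G]`: a member of `𝒮(G)` minimizing `|U_H(G)|`. -/
def IsClarSet (P : PlaneGraph V) (E : Finset (Sym2 V)) (H : Finset (Finset (Sym2 V))) : Prop :=
  SextetAdm P E H ∧ ∀ H', SextetAdm P E H' → (Uset E H).card ≤ (Uset E H').card

/-- A normal Clar set: a Clar set such that `G − H` has a perfect matching. -/
def IsNormalClarSet (P : PlaneGraph V) (E : Finset (Sym2 V))
    (H : Finset (Finset (Sym2 V))) : Prop :=
  IsClarSet P E H ∧ ∃ M : Finset (Sym2 V), M ⊆ E ∧ IsMatching M ∧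
    (∀ e ∈ M, ∀ v : V, v ∈ e → v ∉ facesVerts H) ∧
    ∀ v ∈ Uset E H, ∃ e ∈ M, v ∈ e

/-- The pentagonal faces of the subgraph with edge set `E`. -/
def pentFaces (P : PlaneGraph V) (E : Finset (Sym2 V)) : Finset (Finset (Sym2 V)) :=
  P.faces.filter fun f => f.card = 5 ∧ f ⊆ E

/-- A subgraph with `k` pentagons is extremal if `|U_H(G)| = k` for a Clar set `H`. -/
def IsExtremalSub (P : PlaneGraph V) (E : Finset (Sym2 V)) : Prop :=
  ∃ H, IsClarSet P E H ∧ (Uset E H).card = (pentFaces P E).card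

/-- A pentagonal ring `R_k`: `k` pentagonal faces `R 0, …, R (k-1)` such that
`R i` and `R j` intersect iff `|i − j| = 1 (mod k)`. -/
def IsPentRing (P : PlaneGraph V) (k : ℕ) (R : ZMod k → Finset (Sym2 V)) : Prop :=
  Function.Injective R ∧ (∀ i, R i ∈ P.faces ∧ (R i).card = 5) ∧
  ∀ i j : ZMod k, i ≠ j →
    ((edgeVerts (R i) ∩ edgeVerts (R j)).Nonempty ↔ (j = i + 1 ∨ i = j + 1))

/-- The number of pentagons of the pentagonal fragment `B` adjoining (sharing an edge
with) the pentagon `p`. -/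
def pentAdjCount {P : PlaneGraph V} (B : Fragment P) (p : Finset (Sym2 V)) : ℕ :=
  (B.inFaces.filter fun q => q ≠ p ∧ (q ∩ p).Nonempty).card

/-- The fragment consisting of a single pentagon `P`. -/
def IsPentagonFrag {P : PlaneGraph V} (B : Fragment P) : Prop :=
  IsPentagonalFragment B ∧ B.inFaces.card = 1

/-- `B_2`: the extremal pentagonal fragment with 4 pentagons whose Clar extension is
normal. -/
def IsB2Frag {P : PlaneGraph V} (B : Fragment P) : Prop :=
  IsPentagonalFragment B ∧ B.inFaces.card = 4 ∧ IsExtremalSub P B.edges ∧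
    ∃ H, IsNormalClarSet P B.edges H

/-- `B_3`: the extremal pentagonal fragment with 6 pentagons whose Clar extension is
normal. -/
def IsB3Frag {P : PlaneGraph V} (B : Fragment P) : Prop :=
  IsPentagonalFragment B ∧ B.inFaces.card = 6 ∧ IsExtremalSub P B.edges ∧
    ∃ H, IsNormalClarSet P B.edges H

/-- A pasting edge of the subgraph with edge set `E`: an edge of `E` lying on the
boundary of the Clar extension `C[G]` (not an edge of a Clar hexagon) whose two
end-vertices belong to `V(H)` for a Clar set `H`. -/
def IsPastingEdge (P : PlaneGraph V) (E : Finset (Sym2 V)) (e : Sym2 V) : Prop :=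
  e ∈ E ∧ ∃ H, IsClarSet P E H ∧ (∀ v : V, v ∈ e → v ∈ facesVerts H) ∧ e ∉ H.sup id

/-- `B` arises from pasting `A` and `C` along a common pasting edge:
`B = A ∪ C` and `A ∩ C` is a single pasting edge of both. -/
def IsPasting {P : PlaneGraph V} (B A C : Fragment P) : Prop :=
  B.inFaces = A.inFaces ∪ C.inFaces ∧
  ∃ e : Sym2 V, A.edges ∩ C.edges = {e} ∧ IsPastingEdge P A.edges e ∧ IsPastingEdge P C.edges e

def IsBasicFrag {P : PlaneGraph V} (B : Fragment P) : Prop :=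
  IsPentagonFrag B ∨ IsB2Frag B ∨ IsB3Frag B

/-- The pentagonal fragments generated from `P`, `B_2`, `B_3` by the pasting operation. -/
inductive Pasted (P : PlaneGraph V) : Fragment P → Prop
  | base (B : Fragment P) : IsBasicFrag B → Pasted P B
  | paste (B A C : Fragment P) : Pasted P A → IsBasicFrag C → IsPasting B A C → Pasted P B

/-- `P ∗ P`. -/
def IsPPFrag {P : PlaneGraph V} (B : Fragment P) : Prop :=
  ∃ A C : Fragment P, IsPentagonFrag A ∧ IsPentagonFrag C ∧ IsPasting B A C

/-- `P ∗ B_2`. -/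
def IsPB2Frag {P : PlaneGraph V} (B : Fragment P) : Prop :=
  ∃ A C : Fragment P, IsPentagonFrag A ∧ IsB2Frag C ∧ IsPasting B A C

/-- `P ∗ B_2 ∗ P`. -/
def IsPB2PFrag {P : PlaneGraph V} (B : Fragment P) : Prop :=
  ∃ B' A C D : Fragment P, IsPentagonFrag A ∧ IsB2Frag C ∧ IsPentagonFrag D ∧
    IsPasting B' A C ∧ IsPasting B B' D

/-- The six members of `𝓑_{≥60}`. -/
def SixShapes {P : PlaneGraph V} (B : Fragment P) : Prop :=
  IsPentagonFrag B ∨ IsB2Frag B ∨ IsB3Frag B ∨ IsPPFrag B ∨ IsPB2Frag B ∨ IsPB2PFrag B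

/-- `B_1`: two vertex-disjoint pentagons joined by an edge. -/
def IsB1 (P : PlaneGraph V) (E : Finset (Sym2 V)) : Prop :=
  ∃ (f g : Finset (Sym2 V)) (a b : V), f ∈ P.faces ∧ g ∈ P.faces ∧ f.card = 5 ∧ g.card = 5 ∧
    Disjoint (edgeVerts f) (edgeVerts g) ∧ P.graph.Adj a b ∧
    a ∈ edgeVerts f ∧ b ∈ edgeVerts g ∧ E = f ∪ g ∪ {s(a, b)}

/-- `B_1^k`: `k` copies of `B_1` pasted together along pasting edges of their pentagons. -/
inductive B1Pow (P : PlaneGraph V) : ℕ → Finset (Sym2 V) → Prop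
  | one (E : Finset (Sym2 V)) : IsB1 P E → B1Pow P 1 E
  | succ (k : ℕ) (E X : Finset (Sym2 V)) (e : Sym2 V) (f g : Finset (Sym2 V)) :
      B1Pow P k E → IsB1 P X → E ∩ X = {e} → f ∈ P.faces → g ∈ P.faces →
      f.card = 5 → g.card = 5 → f ⊆ E → g ⊆ X → e ∈ f → e ∈ g →
      IsPastingEdge P f e → IsPastingEdge P g e → B1Pow P (k + 1) (E ∪ X)

/-- `F` contains `B_1^k` for some `2 ≤ k ≤ 4` as a subgraph. -/
def ContainsB1Pow (P : PlaneGraph V) : Prop :=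
  ∃ (k : ℕ) (E : Finset (Sym2 V)), 2 ≤ k ∧ k ≤ 4 ∧ B1Pow P k E

/-- A perfect matching of the plane graph `P`. -/
def IsPerfectMatching (P : PlaneGraph V) (M : Finset (Sym2 V)) : Prop :=
  (∀ e ∈ M, e ∈ P.graph.edgeSet) ∧ IsMatching M ∧ ∀ v : V, ∃ e ∈ M, v ∈ e

/-- A sextet pattern of `P`: mutually disjoint hexagonal faces, all alternating with
respect to a common perfect matching. -/
def IsSextetPattern (P : PlaneGraph V) (H : Finset (Finset (Sym2 V))) : Prop :=
  (∀ f ∈ H, f ∈ P.faces ∧ f.card = 6) ∧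
  (∀ f ∈ H, ∀ g ∈ H, f ≠ g → Disjoint (edgeVerts f) (edgeVerts g)) ∧
  ∃ M : Finset (Sym2 V), IsPerfectMatching P M ∧ ∀ f ∈ H, (f ∩ M).card = 3

/-- A Clar formula: a maximum sextet pattern. -/
def IsClarFormula (P : PlaneGraph V) (H : Finset (Finset (Sym2 V))) : Prop :=
  IsSextetPattern P H ∧ ∀ H', IsSextetPattern P H' → H'.card ≤ H.card

/-- An extremal fullerene graph: the Clar number equals `(n − 12)/6`. -/
def IsExtremalFullerene (P : PlaneGraph V) : Prop :=
  ∃ H, IsClarFormula P H ∧ 6 * H.card = Fintype.card V - 12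

/-- The edges of the union of all maximal pentagonal fragments of `P`. -/
noncomputable def maxPentEdges (P : PlaneGraph V) : Finset (Sym2 V) :=
  @Finset.filter _
    (fun e => ∃ B : Fragment P, IsPentagonalFragment B ∧ IsMaximalIn P B.edges ∧ e ∈ B.edges)
    (Classical.decPred _) (P.faces.sup id)

/-- The disjoint union of two copies of `K_2`. -/
def twoK2 : SimpleGraph (Fin 4) := SimpleGraph.fromEdgeSet {s(0, 1), s(2, 3)}

/-- The tree `T_0` on six vertices: two adjacent 3-degree vertices, each also adjacent
to two leaves. -/
def treeT0 : SimpleGraph (Fin 6) :=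
  SimpleGraph.fromEdgeSet {s(0, 1), s(0, 2), s(0, 3), s(1, 4), s(1, 5)}

open SimpleGraph

lemma mem_edgeVerts {E : Finset (Sym2 V)} {v : V} : v ∈ edgeVerts E ↔ ∃ e ∈ E, v ∈ e := by
  simp [edgeVerts]

omit [Fintype V] in
lemma card_filter_mem_sym2 {A : Finset V} {e : Sym2 V} (he : ¬e.IsDiag) (hA : ∀ v ∈ e, v ∈ A) :
    (A.filter (· ∈ e)).card = 2 := by
  induction e with
  | _ x y =>
    have hxy : x ≠ y := by simpa using he
    have : A.filter (· ∈ s(x, y)) = {x, y} := by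
      ext v
      simp only [Finset.mem_filter, Finset.mem_insert, Finset.mem_singleton, Sym2.mem_iff]
      exact ⟨fun h => h.2, fun h => ⟨hA v (Sym2.mem_iff.2 h), h⟩⟩
    rw [this, Finset.card_pair hxy]

omit [Fintype V] in
lemma card_mul_eq_card_mul_two {A : Finset V} {E : Finset (Sym2 V)} {m : ℕ}
    (hE : ∀ e ∈ E, ¬e.IsDiag ∧ ∀ v ∈ e, v ∈ A)
    (hA : ∀ v ∈ A, (E.filter (v ∈ ·)).card = m) : A.card * m = E.card * 2 :=
  Finset.card_mul_eq_card_mul (fun v e => v ∈ e) hA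
    fun e he => card_filter_mem_sym2 (hE e he).1 (hE e he).2

omit [Fintype V] [DecidableEq V] in
lemma eq_zero_of_sum_le_card_filter {α : Type*} {s : Finset α} {p : α → Prop} [DecidablePred p]
    {g : α → ℕ} (hpos : ∀ a ∈ s, p a → 0 < g a) (hsum : ∑ a ∈ s, g a ≤ (s.filter p).card) :
    ∀ a ∈ s, ¬p a → g a = 0 := by
  intro a ha hpa
  have hsplit : ∑ b ∈ s.filter p, g b + ∑ b ∈ s.filter (¬p ·), g b = ∑ b ∈ s, g b :=
    Finset.sum_filter_add_sum_filter_not s p g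
  rw [Finset.card_eq_sum_ones] at hsum
  have hp : ∑ b ∈ s.filter p, 1 ≤ ∑ b ∈ s.filter p, g b :=
    Finset.sum_le_sum fun b hb => hpos b (Finset.mem_filter.1 hb).1 (Finset.mem_filter.1 hb).2
  have hnp : g a ≤ ∑ b ∈ s.filter (¬p ·), g b :=
    Finset.single_le_sum (fun _ _ => Nat.zero_le _) (Finset.mem_filter.2 ⟨ha, hpa⟩)
  omega

lemma facesVerts_eq_biUnion (H : Finset (Finset (Sym2 V))) :
    facesVerts H = H.biUnion edgeVerts := by
  ext v
  simp only [facesVerts, mem_edgeVerts, Finset.mem_sup, Finset.mem_biUnion, id]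
  grind

def exitVerts (M f : Finset (Sym2 V)) : Finset V :=
  (edgeVerts f).filter fun v => ∃ e ∈ M, v ∈ e ∧ e ∉ f

lemma exitVerts_nonempty_iff {M f : Finset (Sym2 V)} :
    (exitVerts M f).Nonempty ↔ ∃ e ∈ M, e ∉ f ∧ ∃ v : V, v ∈ e ∧ v ∈ edgeVerts f := by
  simp only [exitVerts, Finset.Nonempty, Finset.mem_filter]
  grind

lemma card_edgeVerts_of_isMatching {M : Finset (Sym2 V)} (hM : IsMatching M) :
    (edgeVerts M).card = 2 * M.card := by
  have := card_mul_eq_card_mul_two (A := edgeVerts M) (E := M) (m := 1)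
    (fun e he => ⟨hM.1 e he, fun v hv => mem_edgeVerts.2 ⟨e, he, hv⟩⟩)
    (fun v hv => by
      obtain ⟨e, he, hve⟩ := mem_edgeVerts.1 hv
      refine Finset.card_eq_one.2 ⟨e, Finset.eq_singleton_iff_unique_mem.2 ⟨by simp [he, hve], ?_⟩⟩
      intro e' he'
      rw [Finset.mem_filter] at he'
      by_contra hne
      exact hM.2 e' he'.1 e he hne v he'.2 hve)
  omega

omit [Fintype V] [DecidableEq V] in
lemma IsMatching.subset {M N : Finset (Sym2 V)} (hM : IsMatching M) (hNM : N ⊆ M) :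
    IsMatching N :=
  ⟨fun e he => hM.1 e (hNM he), fun e he e' he' => hM.2 e (hNM he) e' (hNM he')⟩

lemma card_filter_mem_edgeVerts_of_isMatching {M : Finset (Sym2 V)} (hM : IsMatching M)
    (f : Finset (Sym2 V)) :
    ((edgeVerts f).filter (· ∈ edgeVerts M)).card = 2 * (M ∩ f).card + (exitVerts M f).card := by
  have hinside : ((edgeVerts f).filter (· ∈ edgeVerts M)).filter (· ∈ edgeVerts (M ∩ f)) =
      edgeVerts (M ∩ f) := by
    ext v
    simp only [Finset.mem_filter, mem_edgeVerts, Finset.mem_inter]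
    grind
  have hexit : ((edgeVerts f).filter (· ∈ edgeVerts M)).filter (· ∉ edgeVerts (M ∩ f)) =
      exitVerts M f := by
    ext v
    simp only [exitVerts, Finset.mem_filter, mem_edgeVerts, Finset.mem_inter]
    have := hM.2
    grind
  rw [← Finset.card_filter_add_card_filter_not (· ∈ edgeVerts (M ∩ f)), hinside, hexit,
    card_edgeVerts_of_isMatching (hM.subset Finset.inter_subset_left)]

namespace PlaneGraph

variable (P : PlaneGraph V) {f : Finset (Sym2 V)}

lemma card_filter_mem_face (hf : f ∈ P.faces) {v : V} (hv : v ∈ edgeVerts f) :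
    (f.filter (v ∈ ·)).card = 2 := by
  obtain ⟨u, c, hc, rfl⟩ := P.face_cycle f hf
  have hsupp : v ∈ c.support := by
    rw [Walk.mem_support_iff_exists_mem_edges_of_not_nil hc.not_nil]
    simpa [mem_edgeVerts] using hv
  have hinc : (↑(c.edges.toFinset.filter (v ∈ ·)) : Set (Sym2 V)) =
      c.toSubgraph.spanningCoe.incidenceSet v := by
    ext e
    simp [incidenceSet, and_comm]
  rw [← Set.ncard_coe_finset, hinc, Set.ncard_congr' (incidenceSetEquivNeighborSet _ v)]
  exact hc.ncard_neighborSet_toSubgraph_eq_two hsupp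

lemma not_isDiag_of_mem_face (hf : f ∈ P.faces) {e : Sym2 V} (he : e ∈ f) : ¬e.IsDiag :=
  P.graph.not_isDiag_of_mem_edgeSet (P.face_edges f hf e he)

lemma card_edgeVerts_face (hf : f ∈ P.faces) : (edgeVerts f).card = f.card := by
  have := card_mul_eq_card_mul_two (A := edgeVerts f) (E := f)
    (fun e he => ⟨P.not_isDiag_of_mem_face hf he, fun v hv => mem_edgeVerts.2 ⟨e, he, hv⟩⟩)
    (fun v hv => P.card_filter_mem_face hf hv)
  omega

open Classical in
lemma card_incidenceFinset (hP3 : ∀ v, (P.graph.neighborSet v).ncard = 3) (v : V) :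
    (P.graph.incidenceFinset v).card = 3 := by
  rw [← Set.ncard_coe_finset, coe_incidenceFinset,
    Set.ncard_congr' (incidenceSetEquivNeighborSet _ v), hP3]

open Classical in
lemma card_faces_through (hP3 : ∀ v, (P.graph.neighborSet v).ncard = 3) (v : V) :
    (P.faces.filter (v ∈ edgeVerts ·)).card = 3 := by
  have := Finset.card_mul_eq_card_mul (s := P.graph.incidenceFinset v)
    (t := P.faces.filter (v ∈ edgeVerts ·)) (fun e f => e ∈ f) (m := 2) (n := 2)
    (fun e he => ?_) (fun f hf => ?_)
  · rw [P.card_incidenceFinset hP3] at this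
    omega
  · rw [mem_incidenceFinset] at he
    rw [Finset.bipartiteAbove, Finset.filter_filter, ← P.edge_faces e he.1]
    congr 1
    exact Finset.filter_congr fun f _ => ⟨fun h => h.2, fun h => ⟨mem_edgeVerts.2 ⟨e, h, he.2⟩, h⟩⟩
  · rw [Finset.mem_filter] at hf
    rw [Finset.bipartiteBelow, ← P.card_filter_mem_face hf.1 hf.2]
    congr 1
    ext e
    simp only [Finset.mem_filter, mem_incidenceFinset, incidenceSet, Set.mem_ofPred_eq]
    exact ⟨fun h => ⟨h.2, h.1.2⟩, fun h => ⟨⟨P.face_edges f hf.1 e h.1, h.2⟩, h.1⟩⟩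

lemma card_faces_through_notMem (hP3 : ∀ v, (P.graph.neighborSet v).ncard = 3) {v : V}
    {e : Sym2 V} (he : e ∈ P.graph.edgeSet) (hv : v ∈ e) :
    (P.faces.filter fun f => v ∈ edgeVerts f ∧ e ∉ f).card = 1 := by
  have hmem : (P.faces.filter fun f => v ∈ edgeVerts f ∧ e ∈ f) = P.faces.filter (e ∈ ·) :=
    Finset.filter_congr fun f _ => ⟨fun h => h.2, fun h => ⟨mem_edgeVerts.2 ⟨e, h, hv⟩, h⟩⟩
  have hsplit := Finset.card_filter_add_card_filter_not
    (s := P.faces.filter (v ∈ edgeVerts ·)) (e ∈ ·)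
  rw [Finset.filter_filter, hmem, P.edge_faces e he, P.card_faces_through hP3] at hsplit
  rw [← Finset.filter_filter]
  omega

open Classical in
/-- Two distinct faces through `v` have two of the three edges at `v` each, so they share one;
they cannot share both, since the faces avoiding the third edge form a singleton. -/
lemma card_inter_filter_mem (hP3 : ∀ v, (P.graph.neighborSet v).ncard = 3)
    {f h : Finset (Sym2 V)} (hf : f ∈ P.faces) (hh : h ∈ P.faces) (hne : f ≠ h)
    {v : V} (hvf : v ∈ edgeVerts f) (hvh : v ∈ edgeVerts h) :
    ((f ∩ h).filter (v ∈ ·)).card = 1 := by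
  have hsub : ∀ g ∈ P.faces, g.filter (v ∈ ·) ⊆ P.graph.incidenceFinset v := fun g hg e he => by
    rw [Finset.mem_filter] at he
    exact (mem_incidenceFinset _ _ _).2 ⟨P.face_edges g hg e he.1, he.2⟩
  set a := f.filter (v ∈ ·)
  set b := h.filter (v ∈ ·)
  have ha : a.card = 2 := P.card_filter_mem_face hf hvf
  have hb : b.card = 2 := P.card_filter_mem_face hh hvh
  have h3 := P.card_incidenceFinset hP3 v
  have hab : a ≠ b := by
    intro hab
    obtain ⟨c, hc, hca⟩ := Finset.exists_mem_notMem_of_card_lt_card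
      (s := a) (t := P.graph.incidenceFinset v) (by omega)
    rw [mem_incidenceFinset] at hc
    have hcb : c ∉ b := hab ▸ hca
    simp only [a, b, Finset.mem_filter, hc.2, and_true] at hca hcb
    refine hne (Finset.card_le_one.1 (P.card_faces_through_notMem hP3 hc.1 hc.2).le f ?_ h ?_) <;>
      simp [hf, hh, hvf, hvh, hca, hcb]
  have hunion : (a ∪ b).card ≤ 3 :=
    h3 ▸ Finset.card_le_card (Finset.union_subset (hsub f hf) (hsub h hh))
  have hinter := Finset.card_union_add_card_inter a b
  have hne2 : (a ∩ b).card ≠ 2 := fun h2 =>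
    hab ((Finset.eq_of_subset_of_card_le Finset.inter_subset_left (by omega)).symm.trans
      (Finset.eq_of_subset_of_card_le Finset.inter_subset_right (by omega)))
  have := Finset.card_le_card (Finset.inter_subset_left (s₁ := a) (s₂ := b))
  rw [Finset.filter_inter_distrib]
  change (a ∩ b).card = 1
  omega

lemma card_edgeVerts_inter (hP3 : ∀ v, (P.graph.neighborSet v).ncard = 3)
    {f h : Finset (Sym2 V)} (hf : f ∈ P.faces) (hh : h ∈ P.faces) (hne : f ≠ h) :
    (edgeVerts f ∩ edgeVerts h).card = 2 * (f ∩ h).card := by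
  have := card_mul_eq_card_mul_two (A := edgeVerts f ∩ edgeVerts h) (E := f ∩ h) (m := 1)
    (fun e he => by
      rw [Finset.mem_inter] at he
      exact ⟨P.not_isDiag_of_mem_face hf he.1, fun v hv => Finset.mem_inter.2
        ⟨mem_edgeVerts.2 ⟨e, he.1, hv⟩, mem_edgeVerts.2 ⟨e, he.2, hv⟩⟩⟩)
    (fun v hv => by
      rw [Finset.mem_inter] at hv
      exact P.card_inter_filter_mem hP3 hf hh hne hv.1 hv.2)
  omega

lemma even_card_filter_mem_facesVerts (hP3 : ∀ v, (P.graph.neighborSet v).ncard = 3)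
    {H : Finset (Finset (Sym2 V))} (hHP : H ⊆ P.faces)
    (hHdisj : (H : Set (Finset (Sym2 V))).PairwiseDisjoint edgeVerts)
    (hf : f ∈ P.faces) (hfH : f ∉ H) :
    Even ((edgeVerts f).filter (· ∈ facesVerts H)).card := by
  have hbi : (edgeVerts f).filter (· ∈ facesVerts H) = H.biUnion (edgeVerts f ∩ edgeVerts ·) := by
    ext v
    simp only [Finset.mem_filter, Finset.mem_biUnion, Finset.mem_inter, facesVerts_eq_biUnion]
    exact ⟨fun ⟨hv, h, hh, hvh⟩ => ⟨h, hh, hv, hvh⟩, fun ⟨h, hh, hv, hvh⟩ => ⟨hv, h, hh, hvh⟩⟩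
  rw [hbi, Finset.card_biUnion
    (hHdisj.mono_on fun h _ => Finset.inter_subset_right (s₁ := edgeVerts f))]
  refine Finset.even_sum _ fun h hh => ?_
  rw [P.card_edgeVerts_inter hP3 hf (hHP hh) (ne_of_mem_of_not_mem hh hfH).symm]
  exact even_two_mul _

lemma card_facesVerts {H : Finset (Finset (Sym2 V))} (hHP : H ⊆ P.faces)
    (hHdisj : (H : Set (Finset (Sym2 V))).PairwiseDisjoint edgeVerts) :
    (facesVerts H).card = ∑ h ∈ H, h.card := by
  rw [facesVerts_eq_biUnion, Finset.card_biUnion hHdisj]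
  exact Finset.sum_congr rfl fun h hh => P.card_edgeVerts_face (hHP hh)

/-- Every `M`-covered vertex exits exactly one of its three faces: the one not containing its
`M`-edge. -/
lemma sum_card_exitVerts (hP3 : ∀ v, (P.graph.neighborSet v).ncard = 3)
    {M : Finset (Sym2 V)} (hM : IsMatching M) (hMP : ∀ e ∈ M, e ∈ P.graph.edgeSet) :
    ∑ f ∈ P.faces, (exitVerts M f).card = (edgeVerts M).card := by
  have hexit : ∀ f, exitVerts M f ⊆ edgeVerts M := fun f v hv => by
    obtain ⟨-, e, he, hve, -⟩ := Finset.mem_filter.1 hv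
    exact mem_edgeVerts.2 ⟨e, he, hve⟩
  have := Finset.sum_card_bipartiteAbove_eq_sum_card_bipartiteBelow
    (s := P.faces) (t := edgeVerts M) (fun f v => v ∈ exitVerts M f)
  simp only [Finset.bipartiteAbove, Finset.bipartiteBelow, Finset.filter_mem_eq_inter,
    Finset.inter_eq_right.2 (hexit _)] at this
  rw [this, Finset.card_eq_sum_ones]
  refine Finset.sum_congr rfl fun v hv => ?_
  obtain ⟨e, he, hve⟩ := mem_edgeVerts.1 hv
  rw [← P.card_faces_through_notMem hP3 (hMP e he) hve]
  congr 1
  refine Finset.filter_congr fun f _ => ?_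
  simp only [exitVerts, Finset.mem_filter]
  have := hM.2
  grind

lemma odd_card_exitVerts (hP3 : ∀ v, (P.graph.neighborSet v).ncard = 3)
    {H : Finset (Finset (Sym2 V))} (hHP : H ⊆ P.faces)
    (hHdisj : (H : Set (Finset (Sym2 V))).PairwiseDisjoint edgeVerts)
    {M : Finset (Sym2 V)} (hM : IsMatching M) (hMH : edgeVerts M = (facesVerts H)ᶜ)
    (hf : f ∈ P.faces) (hfH : f ∉ H) (hodd : Odd f.card) : Odd (exitVerts M f).card := by
  have hsplit := Finset.card_filter_add_card_filter_not (s := edgeVerts f) (· ∈ facesVerts H)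
  have hcov : (edgeVerts f).filter (· ∉ facesVerts H) = (edgeVerts f).filter (· ∈ edgeVerts M) := by
    simp [hMH]
  rw [hcov, card_filter_mem_edgeVerts_of_isMatching hM, P.card_edgeVerts_face hf] at hsplit
  obtain ⟨k, hk⟩ := P.even_card_filter_mem_facesVerts hP3 hHP hHdisj hf hfH
  obtain ⟨j, hj⟩ := hodd
  exact ⟨j - k - (M ∩ f).card, by omega⟩

end PlaneGraph

/-- Proposition 4.1. Let `H` be a Clar formula of an extremal
fullerene graph `F_n` (`n ≥ 60`) and `M := F_n − H` the perfect matching of the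
remaining vertices. Then a face `f` of `F_n` is a pentagon if and only if there is an
edge `e ∈ M` with `e ∩ f ≠ ∅` and `e ∉ E(f)`. -/
theorem statement_15 (P : PlaneGraph V) (hP : IsFullerene P)
    (hn : 60 ≤ Fintype.card V) (hext : IsExtremalFullerene P)
    (H : Finset (Finset (Sym2 V))) (hH : IsClarFormula P H)
    (M : Finset (Sym2 V))
    (hM : ∀ e : Sym2 V, e ∈ M ↔ e ∈ P.graph.edgeSet ∧ ∀ v : V, v ∈ e → v ∉ facesVerts H)
    (hmatch : IsMatching M)
    (hcover : ∀ v : V, v ∉ facesVerts H → ∃ e ∈ M, v ∈ e) :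
    ∀ f ∈ P.faces,
      (f.card = 5 ↔ ∃ e ∈ M, e ∉ f ∧ ∃ v : V, v ∈ e ∧ v ∈ edgeVerts f) := by
  have hHP : H ⊆ P.faces := fun h hh => (hH.1.1 h hh).1
  have hMH : edgeVerts M = (facesVerts H)ᶜ := by
    ext v
    simp only [mem_edgeVerts, Finset.mem_compl]
    exact ⟨fun ⟨e, he, hve⟩ => ((hM e).1 he).2 v hve, hcover v⟩
  have hcard : (edgeVerts M).card = 12 := by
    obtain ⟨H₀, hH₀, hcard₀⟩ := hext
    have hHH₀ : H.card = H₀.card := le_antisymm (hH₀.2 H hH.1) (hH.2 H₀ hH₀.1)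
    have hVH : (facesVerts H).card = 6 * H.card := by
      rw [P.card_facesVerts hHP hH.1.2.1, Finset.sum_congr rfl fun h hh => (hH.1.1 h hh).2,
        Finset.sum_const, smul_eq_mul, mul_comm]
    have := (facesVerts H).card_le_univ
    rw [hMH, Finset.card_compl]
    omega
  have hpent : ∀ f ∈ P.faces, f.card = 5 → 0 < (exitVerts M f).card := fun f hf h5 =>
    (P.odd_card_exitVerts hP.cubic hHP hH.1.2.1 hmatch hMH hf
      (fun hfH => by simp [(hH.1.1 f hfH).2] at h5) (by rw [h5]; decide)).pos
  have hhex := eq_zero_of_sum_le_card_filter hpent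
    ((P.sum_card_exitVerts hP.cubic hmatch fun e he => ((hM e).1 he).1).trans
      (hcard.trans hP.pentTwelve.symm)).le
  intro f hf
  rw [← exitVerts_nonempty_iff, ← Finset.card_pos]
  refine ⟨hpent f hf, fun hpos => ?_⟩
  by_contra h5
  exact hpos.ne' (hhex f hf h5)

end FG
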